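/- arXiv:math/0102135 — 2 statements merged into one kernel-verified Lean document; each statement's English description precedes it below -/
import Mathlib

section
/- SD({0, 1, 2, ∞}, 7/4) holds. Explicitly: there exists a constant C such that for every real vector space Z and every finite set G ⊆ Z × Z on which the map (a,b) ↦ a − b is injective, one has #G ≤ C · N^{7/4}, where N := max{ #{a : (a,b) ∈ G}, #{a + b : (a,b) ∈ G}, #{a + 2b : (a,b) ∈ G}, #{b : (a,b) ∈ G} }. -/
/-!
Call `(p, q, p', q') ∈ G⁴` an energy quadruple if `p.1 + p.2 = q.1 + q.2`,
`p'.1 + p'.2 = q'.1 + q'.2`, `p.1 = p'.1` and `q.1 = q'.1`. Cauchy–Schwarz over the fibres of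
`g ↦ g.1 + g.2`, and then over the fibres of `(p, q) ↦ (p.1, q.1)`, gives
`#G ^ 4 ≤ N ^ 4 · #quadruples`. In an energy quadruple
`p.1 - p.2 = (q'.1 + 2 q'.2) - q.2 - 2 p'.2`, so injectivity of the difference map recovers `p`,
and then the whole quadruple, from `(q.2, p'.2, q'.1 + 2 q'.2)`. Hence there are at most `N ^ 3`
quadruples and `#G ^ 4 ≤ N ^ 7`.
-/

open Finset

section FiberPairs

variable {α β : Type*} [DecidableEq β]

def fiberPairs (s : Finset α) (f : α → β) : Finset (α × α) :=
  (s ×ˢ s).filter fun q => f q.1 = f q.2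

lemma mem_fiberPairs {s : Finset α} {f : α → β} {q : α × α} :
    q ∈ fiberPairs s f ↔ q.1 ∈ s ∧ q.2 ∈ s ∧ f q.1 = f q.2 := by
  simp [fiberPairs, and_assoc]

lemma card_fiberPairs_eq_sum_sq (s : Finset α) (f : α → β) :
    #(fiberPairs s f) = ∑ b ∈ s.image f, #(s.filter (f · = b)) ^ 2 := by
  rw [card_eq_sum_card_fiberwise (f := fun q : α × α => f q.1) (t := s.image f)
    fun q hq => mem_image_of_mem f (mem_fiberPairs.1 hq).1]
  refine sum_congr rfl fun b _ => ?_
  have hfiber : (fiberPairs s f).filter (fun q => f q.1 = b)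
      = s.filter (f · = b) ×ˢ s.filter (f · = b) := by
    ext ⟨x, y⟩
    simp only [mem_filter, mem_fiberPairs, mem_product]
    constructor
    · rintro ⟨⟨hx, hy, hxy⟩, hxb⟩
      exact ⟨⟨hx, hxb⟩, hy, hxy ▸ hxb⟩
    · rintro ⟨⟨hx, hxb⟩, hy, hyb⟩
      exact ⟨⟨hx, hy, hxb.trans hyb.symm⟩, hxb⟩
  rw [hfiber, card_product, sq]

lemma sq_card_le_card_image_mul_card_fiberPairs (s : Finset α) (f : α → β) :
    #s ^ 2 ≤ #(s.image f) * #(fiberPairs s f) :=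
  calc #s ^ 2 = (∑ b ∈ s.image f, #(s.filter (f · = b))) ^ 2 := by
        rw [← card_eq_sum_card_image f s]
    _ ≤ #(s.image f) * ∑ b ∈ s.image f, #(s.filter (f · = b)) ^ 2 :=
        sq_sum_le_card_mul_sum_sq
    _ = #(s.image f) * #(fiberPairs s f) := by rw [card_fiberPairs_eq_sum_sq]

end FiberPairs

section EnergyQuadruples

variable {Z : Type*} [AddCommGroup Z]

lemma quadruple_eq_of_energy {p q p' q' : Z × Z} (hpq : p.1 + p.2 = q.1 + q.2)
    (hpq' : p'.1 + p'.2 = q'.1 + q'.2) (hpp' : p.1 = p'.1) (hqq' : q.1 = q'.1) :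
    ((p, q), (p', q')) =
      ((p, (p.1 + p.2 - q.2, q.2)), ((p.1, p'.2), (p.1 + p.2 - q.2, p'.2 + q.2 - p.2))) := by
  obtain ⟨x, y⟩ := p; obtain ⟨u, v⟩ := q
  obtain ⟨x', y'⟩ := p'; obtain ⟨u', v'⟩ := q'
  dsimp only at *
  subst hpp' hqq'
  obtain rfl : v' = x + y' - u := eq_sub_of_add_eq' hpq'.symm
  obtain rfl : u = x + y - v := eq_sub_of_add_eq hpq.symm
  simp only [Prod.mk.injEq, true_and]
  abel

lemma fst_sub_snd_eq_of_energy {p q p' q' : Z × Z} (hpq : p.1 + p.2 = q.1 + q.2)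
    (hpq' : p'.1 + p'.2 = q'.1 + q'.2) (hpp' : p.1 = p'.1) (hqq' : q.1 = q'.1) :
    p.1 - p.2 = q'.1 + 2 • q'.2 - q.2 - 2 • p'.2 := by
  have hq' : q' = (p.1 + p.2 - q.2, p'.2 + q.2 - p.2) :=
    congrArg (·.2.2) (quadruple_eq_of_energy hpq hpq' hpp' hqq')
  rw [hq']
  dsimp only
  rw [smul_sub, smul_add]
  abel

lemma card_energy_le [DecidableEq Z] (G : Finset (Z × Z))
    (hG : Set.InjOn (fun g : Z × Z => g.1 - g.2) G) :
    #(fiberPairs (fiberPairs G fun g => g.1 + g.2) fun w => (w.1.1, w.2.1))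
      ≤ #(G.image Prod.snd) ^ 2 * #(G.image fun g => g.1 + 2 • g.2) := by
  have hmem : ∀ {p q p' q' : Z × Z},
      ((p, q), (p', q')) ∈
        fiberPairs (fiberPairs G fun g => g.1 + g.2) (fun w => (w.1.1, w.2.1)) →
      (p ∈ G ∧ q ∈ G ∧ p' ∈ G ∧ q' ∈ G) ∧ p.1 + p.2 = q.1 + q.2 ∧
      p'.1 + p'.2 = q'.1 + q'.2 ∧ p.1 = p'.1 ∧ q.1 = q'.1 := by
    intro p q p' q' hw
    simp only [mem_fiberPairs, Prod.mk.injEq] at hw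
    tauto
  rw [sq, ← card_product, ← card_product]
  refine card_le_card_of_injOn (fun w => ((w.1.2.2, w.2.1.2), w.2.2.1 + 2 • w.2.2.2))
    (fun ⟨⟨p, q⟩, p', q'⟩ hw => ?_)
    fun ⟨⟨p, q⟩, p', q'⟩ hw ⟨⟨p₁, q₁⟩, p₁', q₁'⟩ hw₁ hval => ?_
  · obtain ⟨⟨-, hq, hp', hq'⟩, -⟩ := hmem hw
    simp only [coe_product, Set.mem_prod, coe_image]
    exact ⟨⟨⟨_, hq, rfl⟩, _, hp', rfl⟩, _, hq', rfl⟩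
  · obtain ⟨⟨hp, -⟩, hpq, hpq', hpp', hqq'⟩ := hmem hw
    obtain ⟨⟨hp₁, -⟩, hpq₁, hpq₁', hpp₁', hqq₁'⟩ := hmem hw₁
    simp only [Prod.mk.injEq] at hval
    obtain ⟨⟨hq, hp'⟩, hq'⟩ := hval
    have hpp₁ : p = p₁ := hG hp hp₁ <| by
      simp only [fst_sub_snd_eq_of_energy hpq hpq' hpp' hqq',
        fst_sub_snd_eq_of_energy hpq₁ hpq₁' hpp₁' hqq₁', hq, hp', hq']
    rw [quadruple_eq_of_energy hpq hpq' hpp' hqq',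
      quadruple_eq_of_energy hpq₁ hpq₁' hpp₁' hqq₁', hpp₁, hq, hp']

lemma card_pow_four_le [DecidableEq Z] (G : Finset (Z × Z))
    (hG : Set.InjOn (fun g : Z × Z => g.1 - g.2) G) {N : ℕ} (h₀ : #(G.image Prod.fst) ≤ N)
    (h₁ : #(G.image fun g => g.1 + g.2) ≤ N) (h₂ : #(G.image fun g => g.1 + 2 • g.2) ≤ N)
    (h_infty : #(G.image Prod.snd) ≤ N) :
    #G ^ 4 ≤ N ^ 7 := by
  set P := fiberPairs G fun g => g.1 + g.2
  have hG_sq : #G ^ 2 ≤ N * #P :=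
    (sq_card_le_card_image_mul_card_fiberPairs G _).trans (Nat.mul_le_mul_right _ h₁)
  have hfst : #(P.image fun w => (w.1.1, w.2.1)) ≤ N ^ 2 := by
    refine (card_le_card (t := G.image Prod.fst ×ˢ G.image Prod.fst) ?_).trans ?_
    · simp only [subset_iff, mem_image, mem_product]
      rintro _ ⟨w, hw, rfl⟩
      obtain ⟨hp, hq, -⟩ := mem_fiberPairs.1 hw
      exact ⟨⟨_, hp, rfl⟩, _, hq, rfl⟩
    · rw [card_product, sq]
      exact Nat.mul_le_mul h₀ h₀
  have hP_sq : #P ^ 2 ≤ N ^ 2 * N ^ 3 :=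
    (sq_card_le_card_image_mul_card_fiberPairs P _).trans <| Nat.mul_le_mul hfst <|
      (card_energy_le G hG).trans <| by rw [pow_succ N 2]; gcongr
  calc #G ^ 4 = (#G ^ 2) ^ 2 := by ring
    _ ≤ (N * #P) ^ 2 := by gcongr
    _ = N ^ 2 * #P ^ 2 := by ring
    _ ≤ N ^ 2 * (N ^ 2 * N ^ 3) := by gcongr
    _ = N ^ 7 := by ring

end EnergyQuadruples

lemma Real.le_rpow_div_of_pow_le {x y : ℝ} (hx : 0 ≤ x) (hy : 0 ≤ y) {m n : ℕ}
    (hn : n ≠ 0) (h : x ^ n ≤ y ^ m) : x ≤ y ^ ((m : ℝ) / n) := by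
  rw [div_eq_mul_inv, Real.rpow_mul hy, Real.rpow_natCast,
    Real.le_rpow_inv_iff_of_pos hx (by positivity) (by positivity), Real.rpow_natCast]
  exact h

/-- `SD({0,1,2,∞}, 7/4)`: if `(a,b) ↦ a - b` is injective on a finite set `G ⊆ Z × Z`,
then `#G ≲ N^{7/4}` where `N` is the largest of the cardinalities of the images of `G`
under `(a,b) ↦ a`, `(a,b) ↦ a + b`, `(a,b) ↦ a + 2b` and `(a,b) ↦ b`. -/
theorem SD_zero_one_two_infty :
    ∃ C : ℝ, ∀ (Z : Type) [AddCommGroup Z] [Module ℝ Z],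
      ∀ G : Set (Z × Z), G.Finite →
        Set.InjOn (fun g : Z × Z => g.1 - g.2) G →
        (G.ncard : ℝ) ≤ C *
          ((max (max ((Prod.fst '' G).ncard) (((fun g : Z × Z => g.1 + g.2) '' G).ncard))
            (max (((fun g : Z × Z => g.1 + (2 : ℝ) • g.2) '' G).ncard)
              ((Prod.snd '' G).ncard)) : ℕ) : ℝ) ^ ((7 : ℝ) / 4) := by
  classical
  refine ⟨1, fun Z _ _ G hG hinj => ?_⟩
  lift G to Finset (Z × Z) using hG
  have h_two : (fun g : Z × Z => g.1 + (2 : ℝ) • g.2) = fun g => g.1 + 2 • g.2 := by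
    simp only [two_smul]
  simp only [h_two, ← coe_image, Set.ncard_coe_finset, one_mul]
  have h := card_pow_four_le G hinj (le_max_left _ _ |>.trans (le_max_left _ _))
    (le_max_right _ _ |>.trans (le_max_left _ _)) (le_max_left _ _ |>.trans (le_max_right _ _))
    (le_max_right _ _ |>.trans (le_max_right _ _))
  exact_mod_cast Real.le_rpow_div_of_pow_le (m := 7) (n := 4) (Nat.cast_nonneg _)
    (Nat.cast_nonneg _) four_ne_zero (by exact_mod_cast h)
end

section
/- Let n ≥ 2 be an integer. For every ε > 0 there exists a constant C_ε (depending only on ε, n and the constant C₀ in the definition of discretized lines) such that for every integer N ≥ 2, every separated collection 𝐓 of discretized lines in ℝⁿ, and any two distinct discretized points x₁, x₂ ∈ P, the number of lines of 𝐓 containing both x₁ and x₂ satisfies #{T ∈ 𝐓 : x₁ ∈ T and x₂ ∈ T} ≤ C_ε · N^ε · |x₁ − x₂|^{1−n}. -/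
noncomputable section

/-- The discretized points: `P = N⁻¹ℤ^m ∩ B(0, C₀)`. -/
def discPts (m N : ℕ) (C₀ : ℝ) : Set (EuclideanSpace ℝ (Fin m)) :=
  {x | (∀ i, ∃ k : ℤ, x i = (k : ℝ) / N) ∧ ‖x‖ ≤ C₀}

/-- The direction of the last coordinate axis. -/
def lastCoordDir (m : ℕ) : EuclideanSpace ℝ (Fin m) :=
  if h : 0 < m then EuclideanSpace.single ⟨m - 1, Nat.sub_lt h one_pos⟩ 1 else 0

/-- A discretized line in `ℝ^m` at scale `1/N`: it is recorded by a point `pt` and a unit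
direction `dir` making angle at most `1/100` with the last coordinate direction; its point
set is `{x ∈ P : dist(x, ℓ) ≤ C₀/N}` where `ℓ` is the Euclidean line through `pt` with
direction `dir` (see `DiscLine.pts`). -/
structure DiscLine (m N : ℕ) (C₀ : ℝ) where
  pt : EuclideanSpace ℝ (Fin m)
  dir : EuclideanSpace ℝ (Fin m)
  norm_dir : ‖dir‖ = 1
  angle_le : InnerProductGeometry.angle dir (lastCoordDir m) ≤ 1 / 100

/-- The underlying Euclidean line of a discretized line. -/
def DiscLine.core {m N : ℕ} {C₀ : ℝ} (L : DiscLine m N C₀) :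
    Set (EuclideanSpace ℝ (Fin m)) :=
  {y | ∃ t : ℝ, y = L.pt + t • L.dir}

/-- The set of discretized points of a discretized line:
`{x ∈ P : dist(x, ℓ) ≤ C₀/N}`. -/
def DiscLine.pts {m N : ℕ} {C₀ : ℝ} (L : DiscLine m N C₀) :
    Set (EuclideanSpace ℝ (Fin m)) :=
  {x | x ∈ discPts m N C₀ ∧ Metric.infDist x L.core ≤ C₀ / N}

/-- A collection of discretized lines is separated if the directions of any two distinct
members make an angle of at least `1/N`. -/
def SeparatedLines {m N : ℕ} {C₀ : ℝ} (Ts : Set (DiscLine m N C₀)) : Prop :=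
  ∀ T₁ ∈ Ts, ∀ T₂ ∈ Ts, T₁ ≠ T₂ →
    1 / (N : ℝ) ≤ InnerProductGeometry.angle T₁.dir T₂.dir

/-- The Kakeya estimate `K(n, d)` (with ambient constant `C₀`): for every `ε > 0` there is
`c_ε > 0` such that every separated collection `Ts` of discretized lines in any ambient
dimension `m ≥ 2` satisfying the direction-count condition (a) and the saturation
condition (b), together with any shading `Y` with `#Y(T) ≥ N^{1-ε}`, obeys
`#(⋃ Y(T)) ≥ c_ε N^{d-ε}`. -/
def KakeyaEst (C₀ : ℝ) (n d : ℝ) : Prop :=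
  ∀ ε : ℝ, 0 < ε → ∃ c : ℝ, 0 < c ∧
    ∀ m : ℕ, 2 ≤ m → ∀ N : ℕ, 2 ≤ N →
      ∀ Ts : Set (DiscLine m N C₀), SeparatedLines Ts →
        (∀ ω : EuclideanSpace ℝ (Fin m), ‖ω‖ = 1 → ∀ θ : ℝ, 1 / (N : ℝ) ≤ θ → θ ≤ 1 →
          (({T | T ∈ Ts ∧ InnerProductGeometry.angle T.dir ω ≤ θ}).ncard : ℝ) ≤
            (N : ℝ) ^ ε * ((N : ℝ) * θ) ^ (n - 1)) →
        (N : ℝ) ^ (n - 1 - ε) ≤ (Ts.ncard : ℝ) →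
        ∀ Y : DiscLine m N C₀ → Set (EuclideanSpace ℝ (Fin m)),
          (∀ T ∈ Ts, Y T ⊆ T.pts) →
          (∀ T ∈ Ts, (N : ℝ) ^ ((1 : ℝ) - ε) ≤ ((Y T).ncard : ℝ)) →
          c * (N : ℝ) ^ (d - ε) ≤ ((⋃ T ∈ Ts, Y T).ncard : ℝ)

end

/-!
A line of `Ts` through `x₁` and `x₂` has its direction within `4C₀/(N|x₁ - x₂|)` of
`±(x₂ - x₁)/|x₂ - x₁|`, and every direction lies in the cap of chordal radius `1/2` around the last
coordinate vector `e`. On that cap the orthogonal projection to `e^⊥` shrinks distances by at most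
a factor `2`, so the projected directions form a `1/(4N)`-separated subset of two balls of radius
`4C₀/(N|x₁ - x₂|)` in the `(n-1)`-dimensional space `e^⊥`, and comparing volumes of disjoint balls
bounds their number by `2 (34 C₀/|x₁ - x₂|)^(n-1)`.
-/

open Metric MeasureTheory Module Real
open scoped RealInnerProductSpace

section NormedSpace

variable {E : Type*} [NormedAddCommGroup E] [NormedSpace ℝ E]

theorem ncard_le_of_pairwise_le_dist_of_subset_closedBall [FiniteDimensional ℝ E] {S : Set E}
    {c : E} {R ρ : ℝ} (hρ : 0 < ρ) (hR : 0 ≤ R) (hS : S ⊆ closedBall c R)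
    (hsep : S.Pairwise (ρ ≤ dist · ·)) :
    (S.ncard : ℝ) ≤ (2 * R / ρ + 1) ^ finrank ℝ E := by
  rcases S.finite_or_infinite with hfin | hinf
  swap
  · rw [hinf.ncard, Nat.cast_zero]; positivity
  borelize E
  set μ : Measure E := Measure.addHaar
  lift S to Finset E using hfin
  have hdisj : (S : Set E).PairwiseDisjoint (ball · (ρ / 2)) := fun x hx y hy hxy =>
    ball_disjoint_ball (by linarith [hsep hx hy hxy])
  have hsub : ⋃ x ∈ S, ball x (ρ / 2) ⊆ ball c (R + ρ / 2) := by
    simp only [Set.iUnion_subset_iff]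
    intro x hx
    exact ball_subset_ball' (by linarith [mem_closedBall.mp (hS hx)])
  have hvol : S.card * μ (ball 0 (ρ / 2)) ≤ μ (ball c (R + ρ / 2)) :=
    calc S.card * μ (ball 0 (ρ / 2)) = ∑ x ∈ S, μ (ball x (ρ / 2)) := by
          simp [Measure.addHaar_ball_center]
      _ = μ (⋃ x ∈ S, ball x (ρ / 2)) :=
          (measure_biUnion_finset hdisj fun _ _ => measurableSet_ball).symm
      _ ≤ μ (ball c (R + ρ / 2)) := measure_mono hsub
  rw [Measure.addHaar_ball_of_pos μ (0 : E) (by positivity : 0 < ρ / 2),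
    Measure.addHaar_ball_of_pos μ c (by positivity : 0 < R + ρ / 2),
    ← mul_assoc,
    ENNReal.mul_le_mul_iff_left (measure_ball_pos μ 0 one_pos).ne' measure_ball_lt_top.ne,
    ← ENNReal.ofReal_natCast, ← ENNReal.ofReal_mul (by positivity),
    ENNReal.ofReal_le_ofReal_iff (by positivity), ← le_div_iff₀ (by positivity), ← div_pow] at hvol
  rw [Set.ncard_coe_finset]
  refine hvol.trans_eq (congrArg (· ^ _) ?_)
  field_simp

theorem norm_sub_inv_norm_smul_le_of_nonneg {v w : E} (hv : ‖v‖ = 1) (hw0 : w ≠ 0) {t η : ℝ}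
    (ht : 0 ≤ t) (hw : ‖w - t • v‖ ≤ η) : ‖v - ‖w‖⁻¹ • w‖ ≤ 2 * η / ‖w‖ := by
  have hnorm : |‖w‖ - t| ≤ η := by
    simpa [norm_smul, hv, abs_of_nonneg ht] using (abs_norm_sub_norm_le w (t • v)).trans hw
  have hscaled : ‖‖w‖ • v - w‖ ≤ 2 * η :=
    calc ‖‖w‖ • v - w‖ ≤ ‖‖w‖ • v - t • v‖ + ‖t • v - w‖ := norm_sub_le_norm_sub_add_norm_sub ..
      _ = |‖w‖ - t| + ‖w - t • v‖ := by
          rw [← sub_smul, norm_smul, hv, mul_one, Real.norm_eq_abs, norm_sub_rev]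
      _ ≤ 2 * η := by linarith
  rw [show v - ‖w‖⁻¹ • w = ‖w‖⁻¹ • (‖w‖ • v - w) by
      rw [smul_sub, inv_smul_smul₀ (norm_ne_zero_iff.2 hw0)],
    norm_smul, norm_inv, norm_norm, div_eq_inv_mul]
  gcongr

theorem mem_closedBall_union_of_norm_sub_smul_le {v w : E} (hv : ‖v‖ = 1) (hw0 : w ≠ 0)
    {t η : ℝ} (hw : ‖w - t • v‖ ≤ η) :
    v ∈ closedBall (‖w‖⁻¹ • w) (2 * η / ‖w‖) ∪ closedBall (-(‖w‖⁻¹ • w)) (2 * η / ‖w‖) := by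
  simp only [Set.mem_union, mem_closedBall, dist_eq_norm, sub_neg_eq_add]
  rcases le_total 0 t with ht | ht
  · exact .inl (norm_sub_inv_norm_smul_le_of_nonneg hv hw0 ht hw)
  · have := norm_sub_inv_norm_smul_le_of_nonneg (v := -v) (t := -t) (η := η)
      (by rwa [norm_neg]) hw0 (neg_nonneg.2 ht) (by rwa [neg_smul_neg])
    rw [show v + ‖w‖⁻¹ • w = -(-v - ‖w‖⁻¹ • w) by abel, norm_neg]
    exact .inr this

end NormedSpace

section InnerProductSpace

variable {E : Type*} [NormedAddCommGroup E] [InnerProductSpace ℝ E]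

namespace InnerProductGeometry

theorem norm_sub_sq_eq_two_sub_two_mul_cos_angle {x y : E} (hx : ‖x‖ = 1) (hy : ‖y‖ = 1) :
    ‖x - y‖ ^ 2 = 2 - 2 * cos (angle x y) := by
  rw [norm_sub_sq_real, cos_angle, hx, hy]; ring

theorem mul_angle_le_norm_sub {x y : E} (hx : ‖x‖ = 1) (hy : ‖y‖ = 1) :
    2 / π * angle x y ≤ ‖x - y‖ := by
  have hcos := cos_le_one_sub_mul_cos_sq (abs_le.2 ⟨by linarith [angle_nonneg x y, pi_pos],
    angle_le_pi x y⟩)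
  refine le_of_sq_le_sq ?_ (norm_nonneg _)
  rw [norm_sub_sq_eq_two_sub_two_mul_cos_angle hx hy]
  have : (2 / π * angle x y) ^ 2 = 2 * (2 / π ^ 2 * angle x y ^ 2) := by ring
  linarith

theorem norm_sub_le_angle {x y : E} (hx : ‖x‖ = 1) (hy : ‖y‖ = 1) : ‖x - y‖ ≤ angle x y := by
  refine le_of_sq_le_sq ?_ (angle_nonneg x y)
  rw [norm_sub_sq_eq_two_sub_two_mul_cos_angle hx hy]
  linarith [one_sub_sq_div_two_le_cos (x := angle x y)]

end InnerProductGeometry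

theorem abs_inner_sub_le_mul_norm_sub {e v w : E} {δ : ℝ} (hv : ‖v‖ = 1) (hw : ‖w‖ = 1)
    (he : ‖e‖ = 1) (hve : ‖v - e‖ ≤ δ) (hwe : ‖w - e‖ ≤ δ) :
    |⟪e, v - w⟫| ≤ δ * ‖v - w‖ := by
  have hdiff : ⟪e, v - w⟫ = (‖w - e‖ - ‖v - e‖) * (‖w - e‖ + ‖v - e‖) / 2 := by
    have h := norm_sub_sq_real v e
    have h' := norm_sub_sq_real w e
    rw [hv, he] at h
    rw [hw, he] at h'
    rw [inner_sub_right, real_inner_comm v e, real_inner_comm w e]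
    linear_combination (h - h') / 2
  have hnorm : |‖w - e‖ - ‖v - e‖| ≤ ‖v - w‖ := by
    simpa [norm_sub_rev v w] using abs_norm_sub_norm_le (w - e) (v - e)
  rw [hdiff, abs_div, abs_mul, abs_two, abs_of_nonneg (by positivity : 0 ≤ ‖w - e‖ + ‖v - e‖)]
  calc |‖w - e‖ - ‖v - e‖| * (‖w - e‖ + ‖v - e‖) / 2 ≤ ‖v - w‖ * (2 * δ) / 2 := by
        gcongr; linarith
    _ = δ * ‖v - w‖ := by ring

theorem norm_sub_le_two_mul_norm_orthogonalProjectionOnto_sub {e v w : E} (he : ‖e‖ = 1)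
    (hv : v ∈ sphere 0 1 ∩ closedBall e (1 / 2)) (hw : w ∈ sphere 0 1 ∩ closedBall e (1 / 2)) :
    ‖v - w‖ ≤ 2 * ‖(ℝ ∙ e)ᗮ.orthogonalProjectionOnto v - (ℝ ∙ e)ᗮ.orthogonalProjectionOnto w‖ := by
  simp only [Set.mem_inter_iff, mem_sphere_zero_iff_norm, mem_closedBall, dist_eq_norm] at hv hw
  have hinner := abs_inner_sub_le_mul_norm_sub hv.1 hw.1 he hv.2 hw.2
  have hpyth := (ℝ ∙ e).norm_sq_eq_add_norm_sq_starProjection (v - w)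
  rw [Submodule.starProjection_unit_singleton ℝ he, norm_smul, Real.norm_eq_abs, he, mul_one,
    sq_abs] at hpyth
  rw [← map_sub]
  refine le_of_sq_le_sq ?_ (by positivity)
  have : ⟪e, v - w⟫ ^ 2 ≤ (1 / 2 * ‖v - w‖) ^ 2 := sq_le_sq' (abs_le.1 hinner).1 (abs_le.1 hinner).2
  have hcoe : ‖(ℝ ∙ e)ᗮ.starProjection (v - w)‖ = ‖(ℝ ∙ e)ᗮ.orthogonalProjectionOnto (v - w)‖ := rfl
  rw [hcoe] at hpyth
  nlinarith [sq_nonneg ‖v - w‖]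

variable [FiniteDimensional ℝ E] {e : E} {S : Set E} {δ ρ : ℝ}

theorem ncard_le_of_subset_sphere_inter_closedBall (he : ‖e‖ = 1) (hρ : 0 < ρ) (hδ : 0 ≤ δ)
    (hS : S ⊆ sphere 0 1 ∩ closedBall e (1 / 2)) {c : E} (hSc : S ⊆ closedBall c δ)
    (hsep : S.Pairwise (ρ ≤ dist · ·)) :
    (S.ncard : ℝ) ≤ (4 * δ / ρ + 1) ^ (finrank ℝ E - 1) := by
  set P := (ℝ ∙ e)ᗮ.orthogonalProjectionOnto
  have hP : ∀ v ∈ S, ∀ w ∈ S, dist v w ≤ 2 * dist (P v) (P w) := fun v hv w hw => by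
    simpa only [dist_eq_norm] using
      norm_sub_le_two_mul_norm_orthogonalProjectionOnto_sub he (hS hv) (hS hw)
  have hinj : S.InjOn P := fun v hv w hw h =>
    dist_le_zero.1 (by simpa [h] using hP v hv w hw)
  have hrank : finrank ℝ (ℝ ∙ e)ᗮ = finrank ℝ E - 1 := by
    have := (ℝ ∙ e).finrank_add_finrank_orthogonal
    rw [finrank_span_singleton (norm_ne_zero_iff.1 (he ▸ one_ne_zero))] at this
    omega
  have hball : P '' S ⊆ closedBall (P c) δ := by
    rintro _ ⟨v, hv, rfl⟩
    rw [mem_closedBall, dist_eq_norm, ← map_sub]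
    exact (Submodule.norm_orthogonalProjectionOnto_apply_le _ _).trans
      (mem_closedBall_iff_norm.1 (hSc hv))
  have hsep' : (P '' S).Pairwise (ρ / 2 ≤ dist · ·) := by
    rintro _ ⟨v, hv, rfl⟩ _ ⟨w, hw, rfl⟩ hne
    linarith [hsep hv hw (ne_of_apply_ne P hne), hP v hv w hw]
  rw [← hinj.ncard_image, ← hrank]
  calc ((P '' S).ncard : ℝ) ≤ (2 * δ / (ρ / 2) + 1) ^ finrank ℝ (ℝ ∙ e)ᗮ :=
        ncard_le_of_pairwise_le_dist_of_subset_closedBall (half_pos hρ) hδ hball hsep'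
    _ = (4 * δ / ρ + 1) ^ finrank ℝ (ℝ ∙ e)ᗮ := by congr 2; field_simp; ring

theorem ncard_le_of_subset_sphere_inter_closedBall_union (he : ‖e‖ = 1) (hρ : 0 < ρ)
    (hδ : 0 ≤ δ) (hS : S ⊆ sphere 0 1 ∩ closedBall e (1 / 2)) {u : E}
    (hSu : S ⊆ closedBall u δ ∪ closedBall (-u) δ) (hsep : S.Pairwise (ρ ≤ dist · ·)) :
    (S.ncard : ℝ) ≤ 2 * (4 * δ / ρ + 1) ^ (finrank ℝ E - 1) := by
  have hsplit : S = (S ∩ closedBall u δ) ∪ (S ∩ closedBall (-u) δ) := by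
    rw [← Set.inter_union_distrib_left, Set.inter_eq_left.2 hSu]
  have hcap : ∀ c, ((S ∩ closedBall c δ).ncard : ℝ) ≤ (4 * δ / ρ + 1) ^ (finrank ℝ E - 1) :=
    fun c => ncard_le_of_subset_sphere_inter_closedBall he hρ hδ
      (Set.inter_subset_left.trans hS) Set.inter_subset_right (hsep.mono Set.inter_subset_left)
  calc (S.ncard : ℝ) ≤ (S ∩ closedBall u δ).ncard + (S ∩ closedBall (-u) δ).ncard := by
        conv_lhs => rw [hsplit]
        exact_mod_cast Set.ncard_union_le _ _
    _ ≤ 2 * (4 * δ / ρ + 1) ^ (finrank ℝ E - 1) := by linarith [hcap u, hcap (-u)]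

end InnerProductSpace

theorem norm_lastCoordDir {m : ℕ} (hm : 0 < m) : ‖lastCoordDir m‖ = 1 := by
  simp [lastCoordDir, hm]

namespace DiscLine

variable {m N : ℕ} {C₀ : ℝ} (L : DiscLine m N C₀)

theorem core_eq_range : L.core = Set.range fun t : ℝ => L.pt + t • L.dir := by
  ext; simp [core, eq_comm]

theorem isClosed_core : IsClosed L.core := by
  rw [core_eq_range]
  refine (Isometry.of_dist_eq fun s t => ?_).isClosedEmbedding.isClosed_range
  rw [dist_add_left, dist_eq_norm, ← sub_smul, norm_smul, L.norm_dir, mul_one, Real.dist_eq,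
    Real.norm_eq_abs]

theorem exists_norm_sub_smul_dir_le {x₁ x₂ : EuclideanSpace ℝ (Fin m)} (h₁ : x₁ ∈ L.pts)
    (h₂ : x₂ ∈ L.pts) : ∃ t : ℝ, ‖x₂ - x₁ - t • L.dir‖ ≤ 2 * (C₀ / N) := by
  have hne : L.core.Nonempty := ⟨L.pt, 0, by simp⟩
  obtain ⟨_, ⟨t₁, rfl⟩, hd₁⟩ := L.isClosed_core.exists_infDist_eq_dist hne x₁
  obtain ⟨_, ⟨t₂, rfl⟩, hd₂⟩ := L.isClosed_core.exists_infDist_eq_dist hne x₂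
  refine ⟨t₂ - t₁, ?_⟩
  calc ‖x₂ - x₁ - (t₂ - t₁) • L.dir‖
        = ‖(x₂ - (L.pt + t₂ • L.dir)) - (x₁ - (L.pt + t₁ • L.dir))‖ := by
          rw [sub_smul]; congr 1; abel
    _ ≤ dist x₂ (L.pt + t₂ • L.dir) + dist x₁ (L.pt + t₁ • L.dir) := by
          rw [dist_eq_norm, dist_eq_norm]; exact norm_sub_le _ _
    _ ≤ C₀ / N + C₀ / N := add_le_add (hd₂ ▸ h₂.2) (hd₁ ▸ h₁.2)
    _ = 2 * (C₀ / N) := by ring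

theorem dir_mem_closedBall_union {x₁ x₂ : EuclideanSpace ℝ (Fin m)} (h₁ : x₁ ∈ L.pts)
    (h₂ : x₂ ∈ L.pts) (hne : x₁ ≠ x₂) :
    L.dir ∈ closedBall (‖x₂ - x₁‖⁻¹ • (x₂ - x₁)) (4 * C₀ / (N * ‖x₂ - x₁‖)) ∪
      closedBall (-(‖x₂ - x₁‖⁻¹ • (x₂ - x₁))) (4 * C₀ / (N * ‖x₂ - x₁‖)) := by
  obtain ⟨t, ht⟩ := L.exists_norm_sub_smul_dir_le h₁ h₂
  have hδ : 2 * (2 * (C₀ / N)) / ‖x₂ - x₁‖ = 4 * C₀ / (N * ‖x₂ - x₁‖) := by ring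
  simpa only [hδ] using mem_closedBall_union_of_norm_sub_smul_le L.norm_dir
    (sub_ne_zero.2 hne.symm) ht

theorem dir_mem_sphere_inter_closedBall (hm : 0 < m) :
    L.dir ∈ sphere 0 1 ∩ closedBall (lastCoordDir m) (1 / 2) := by
  refine ⟨mem_sphere_zero_iff_norm.2 L.norm_dir, ?_⟩
  rw [mem_closedBall, dist_eq_norm]
  linarith [InnerProductGeometry.norm_sub_le_angle L.norm_dir (norm_lastCoordDir hm), L.angle_le]

end DiscLine

namespace SeparatedLines

variable {m N : ℕ} {C₀ : ℝ} {Ts : Set (DiscLine m N C₀)}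

theorem injOn_dir (h : SeparatedLines Ts) (hN : 0 < N) : Ts.InjOn DiscLine.dir := by
  intro T hT T' hT' hdir
  by_contra hne
  have hsep := h T hT T' hT' hne
  rw [hdir, InnerProductGeometry.angle_self (norm_ne_zero_iff.1 (T'.norm_dir ▸ one_ne_zero))]
    at hsep
  have : (0 : ℝ) < 1 / N := by positivity
  linarith

theorem pairwise_le_dist_dir (h : SeparatedLines Ts) :
    (DiscLine.dir '' Ts).Pairwise (1 / (2 * N) ≤ dist · ·) := by
  rintro _ ⟨T, hT, rfl⟩ _ ⟨T', hT', rfl⟩ hne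
  have hsep := h T hT T' hT' (ne_of_apply_ne _ hne)
  have hπ : (1 : ℝ) / 2 ≤ 2 / π := by
    rw [div_le_div_iff₀ two_pos pi_pos]; linarith [pi_le_four]
  calc (1 : ℝ) / (2 * N) = 1 / 2 * (1 / N) := by ring
    _ ≤ 2 / π * InnerProductGeometry.angle T.dir T'.dir := by gcongr
    _ ≤ dist T.dir T'.dir := by
        rw [dist_eq_norm]; exact InnerProductGeometry.mul_angle_le_norm_sub T.norm_dir T'.norm_dir

end SeparatedLines

theorem ncard_lines_through_two_points_le {m N : ℕ} {C₀ : ℝ} (hm : 0 < m) (hN : 0 < N)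
    (hC₀ : 0 ≤ C₀) {Ts : Set (DiscLine m N C₀)} (hTs : SeparatedLines Ts)
    {x₁ x₂ : EuclideanSpace ℝ (Fin m)} (hne : x₁ ≠ x₂) :
    (({T | T ∈ Ts ∧ x₁ ∈ T.pts ∧ x₂ ∈ T.pts}).ncard : ℝ) ≤
      2 * (32 * C₀ / dist x₁ x₂ + 1) ^ (m - 1) := by
  set Q := {T | T ∈ Ts ∧ x₁ ∈ T.pts ∧ x₂ ∈ T.pts}
  have hQ : Q ⊆ Ts := fun T hT => hT.1
  rw [← ((hTs.injOn_dir hN).mono hQ).ncard_image]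
  refine (ncard_le_of_subset_sphere_inter_closedBall_union (norm_lastCoordDir hm)
    (by positivity : (0 : ℝ) < 1 / (2 * N)) (by positivity : 0 ≤ 4 * C₀ / (N * ‖x₂ - x₁‖))
    (by rintro _ ⟨T, -, rfl⟩; exact T.dir_mem_sphere_inter_closedBall hm)
    (by rintro _ ⟨T, hT, rfl⟩; exact T.dir_mem_closedBall_union hT.2.1 hT.2.2 hne)
    (hTs.pairwise_le_dist_dir.mono (Set.image_mono hQ))).trans_eq ?_
  have hd : ‖x₂ - x₁‖ ≠ 0 := norm_ne_zero_iff.2 (sub_ne_zero.2 hne.symm)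
  rw [finrank_euclideanSpace_fin, dist_eq_norm']
  congr 3
  field_simp
  ring

/-- Two distinct discretized points lie in at most `⪅ |x₁ - x₂|^{1-n}` lines of a
separated collection. -/
theorem lines_through_two_points (n : ℕ) (hn : 2 ≤ n) (C₀ : ℝ) (hC₀ : 100 ≤ C₀) :
    ∀ ε : ℝ, 0 < ε → ∃ C : ℝ, 0 < C ∧
      ∀ N : ℕ, 2 ≤ N →
        ∀ Ts : Set (DiscLine n N C₀), SeparatedLines Ts →
          ∀ x₁ x₂ : EuclideanSpace ℝ (Fin n),
            x₁ ∈ discPts n N C₀ → x₂ ∈ discPts n N C₀ → x₁ ≠ x₂ →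
            (({T | T ∈ Ts ∧ x₁ ∈ T.pts ∧ x₂ ∈ T.pts}).ncard : ℝ) ≤
              C * (N : ℝ) ^ ε * dist x₁ x₂ ^ ((1 : ℝ) - (n : ℝ)) := by
  intro ε hε
  refine ⟨2 * (34 * C₀) ^ (n - 1), by positivity, ?_⟩
  intro N hN Ts hTs x₁ x₂ hx₁ hx₂ hne
  set d := dist x₁ x₂
  have hd : 0 < d := dist_pos.2 hne
  have hd₀ : d ≤ 2 * C₀ := (dist_le_norm_add_norm x₁ x₂).trans (by linarith [hx₁.2, hx₂.2])
  have hexp : (1 : ℝ) - n = -((n - 1 : ℕ) : ℝ) := by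
    push_cast [Nat.cast_sub (by omega : 1 ≤ n)]; ring
  calc (({T | T ∈ Ts ∧ x₁ ∈ T.pts ∧ x₂ ∈ T.pts}).ncard : ℝ)
      ≤ 2 * (32 * C₀ / d + 1) ^ (n - 1) :=
        ncard_lines_through_two_points_le (by omega) (by omega) (by linarith) hTs hne
    _ ≤ 2 * (34 * C₀ / d) ^ (n - 1) := by
        gcongr
        rw [div_add_one hd.ne', div_le_div_iff_of_pos_right hd]
        linarith
    _ = 2 * (34 * C₀) ^ (n - 1) * d ^ ((1 : ℝ) - n) := by
        rw [hexp, Real.rpow_neg hd.le, Real.rpow_natCast, div_pow, div_eq_mul_inv, mul_assoc]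
    _ ≤ 2 * (34 * C₀) ^ (n - 1) * (N : ℝ) ^ ε * d ^ ((1 : ℝ) - n) := by
        have hNε : 1 ≤ (N : ℝ) ^ ε := Real.one_le_rpow (by norm_cast; omega) hε.le
        gcongr ?_ * _
        exact le_mul_of_one_le_right (by positivity) hNε
end
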